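/- In the chain SCM X₁ → Y → X₂ with var(X₁) = var(U_Y) = 1/ε, var(U₂) = ε⁴, and α₂ = 1/ε (for 0 < ε < 1), the mechanism w = (0, ε) (i.e., f = (1/α₂)X₂) has MSE equal to ε⁶ and improvement 1/sqrt(1+ε²) ≥ 1 - ε, while the optimal improvement is 1. Hence a mechanism depending only on the proxy X₂ can be simultaneously near-risk-optimal and near-improvement-optimal. -/

import Mathlib

open Real

theorem one_sub_le_one_div_sqrt_one_add_sq {x : ℝ} (hx : 0 ≤ x) : 1 - x ≤ 1 / √(1 + x ^ 2) := by
  have hsqrt : √(1 + x ^ 2) ≤ 1 + x :=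
    sqrt_le_iff.mpr ⟨by positivity, by nlinarith⟩
  calc 1 - x ≤ 1 / (1 + x) := by
        rw [le_div_iff₀ (by positivity)]
        nlinarith
    _ ≤ 1 / √(1 + x ^ 2) :=
        one_div_le_one_div_of_le (sqrt_pos.mpr (by positivity)) hsqrt

theorem div_sqrt_sq_add_sq_le_one (a b : ℝ) : a / √(a ^ 2 + b ^ 2) ≤ 1 := by
  refine div_le_one_of_le₀ ?_ (sqrt_nonneg _)
  calc a ≤ |a| := le_abs_self a
    _ = √(a ^ 2) := (sqrt_sq_eq_abs a).symm
    _ ≤ √(a ^ 2 + b ^ 2) := sqrt_le_sqrt (by nlinarith)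

theorem stmt9_general (ε : ℝ) (hε : 0 < ε) :
    ∀ α2 w1 w2 : ℝ, α2 = 1 / ε → w1 = 0 → w2 = ε →
    ((w1 + α2 * w2 - 1) ^ 2 * (1 / ε) + (w2 * α2 - 1) ^ 2 * (1 / ε)
        + w2 ^ 2 * ε ^ 4 = ε ^ 6) ∧
    ((w1 + α2 * w2) / Real.sqrt ((w1 + α2 * w2) ^ 2 + w2 ^ 2)
        = 1 / Real.sqrt (1 + ε ^ 2)) ∧
    (1 - ε ≤ 1 / Real.sqrt (1 + ε ^ 2)) ∧
    (∀ a b : ℝ, a / Real.sqrt (a ^ 2 + b ^ 2) ≤ 1) := by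
  rintro α2 w1 w2 rfl rfl hw2
  subst w2
  -- `w₁ + α₂ w₂ = 1`: the mechanism is unbiased for `Y`, so only the `U₂` term `ε² · ε⁴` survives
  have hgain : 0 + 1 / ε * ε = 1 := by field_simp; norm_num
  have hgain' : ε * (1 / ε) = 1 := by field_simp
  refine ⟨?_, ?_, one_sub_le_one_div_sqrt_one_add_sq hε.le, div_sqrt_sq_add_sq_le_one⟩
  · rw [hgain, hgain']
    ring
  · rw [hgain, one_pow]

/-- Strong proxy (`α₂ = 1/ε`): the proxy-only mechanism `w = (0, ε)` has MSE `ε⁶` and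
improvement `1/sqrt(1+ε²) ≥ 1 - ε`, while the optimal improvement is `1`. -/
theorem stmt9 (ε : ℝ) (hε : 0 < ε) (hε1 : ε < 1) :
    ∀ α2 w1 w2 : ℝ, α2 = 1 / ε → w1 = 0 → w2 = ε →
    ((w1 + α2 * w2 - 1) ^ 2 * (1 / ε) + (w2 * α2 - 1) ^ 2 * (1 / ε)
        + w2 ^ 2 * ε ^ 4 = ε ^ 6) ∧
    ((w1 + α2 * w2) / Real.sqrt ((w1 + α2 * w2) ^ 2 + w2 ^ 2)
        = 1 / Real.sqrt (1 + ε ^ 2)) ∧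
    (1 - ε ≤ 1 / Real.sqrt (1 + ε ^ 2)) ∧
    (∀ a b : ℝ, a / Real.sqrt (a ^ 2 + b ^ 2) ≤ 1) :=
  stmt9_general ε hε
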